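/- Let k be a field of characteristic zero, let g be a finite-dimensional Lie algebra over k equipped with a nondegenerate symmetric invariant bilinear form κ, and let H, H' ∈ g be such that g is the internal direct sum, over pairs of integers (m, n), of the simultaneous eigenspaces g_{m,n} = {x ∈ g : ⁅H, x⁆ = m • x and ⁅H', x⁆ = n • x}. If g_{m,n} = 0 whenever n < 0 and m ≥ 0 (i.e. every element of negative H'-grade has negative H-grade), then g_{m,n} = 0 whenever m < 0 and n > 0 (i.e. no element of negative H-grade has positive H'-grade). -/
import Mathlib


/-- The simultaneous eigenspace
`g_{m,n} = {x ∈ g : ⁅H, x⁆ = m • x and ⁅H', x⁆ = n • x}` for the adjoint actions of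
`H, H' ∈ g`, with integer eigenvalues `m, n`. -/
def simulEigenspace (k : Type*) {g : Type*} [Field k] [LieRing g] [LieAlgebra k g]
    (H H' : g) (m n : ℤ) : Submodule k g where
  carrier := {x : g | ⁅H, x⁆ = m • x ∧ ⁅H', x⁆ = n • x}
  add_mem' := by
    rintro a b ⟨ha1, ha2⟩ ⟨hb1, hb2⟩
    exact ⟨by rw [lie_add, ha1, hb1, smul_add], by rw [lie_add, ha2, hb2, smul_add]⟩
  zero_mem' := ⟨by simp, by simp⟩
  smul_mem' := by
    rintro c a ⟨ha1, ha2⟩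
    exact ⟨by rw [lie_smul, ha1, smul_comm], by rw [lie_smul, ha2, smul_comm]⟩

/-- Let `g` be a finite-dimensional Lie algebra over a field `k` of
characteristic zero, equipped with a nondegenerate symmetric invariant bilinear form
`κ`, and let `H, H' ∈ g` be such that `g` is the internal direct sum of the
simultaneous eigenspaces `g_{m,n}` over pairs of integers `(m, n)`. If `g_{m,n} = 0`
whenever `n < 0` and `m ≥ 0` (every element of negative `H'`-grade has negative
`H`-grade), then `g_{m,n} = 0` whenever `m < 0` and `n > 0` (no element of negative
`H`-grade has positive `H'`-grade). -/
theorem secondary_qhr_statement12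
    {k : Type*} [Field k] [CharZero k]
    {g : Type*} [LieRing g] [LieAlgebra k g] [FiniteDimensional k g]
    (κ : g →ₗ[k] g →ₗ[k] k)
    (hsymm : ∀ x y : g, κ x y = κ y x)
    (hinv : ∀ x y z : g, κ ⁅z, x⁆ y + κ x ⁅z, y⁆ = 0)
    (hnondeg : ∀ x : g, (∀ y : g, κ x y = 0) → x = 0)
    (H H' : g)
    (hinternal : DirectSum.IsInternal
      (fun mn : ℤ × ℤ => simulEigenspace k H H' mn.1 mn.2))
    (hvanish : ∀ m n : ℤ, n < 0 → 0 ≤ m → simulEigenspace k H H' m n = ⊥) :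
    ∀ m n : ℤ, m < 0 → 0 < n → simulEigenspace k H H' m n = ⊥ := by
  intro m n hm hn
  rw [eq_bot_iff]
  rintro x ⟨hx1, hx2⟩
  refine (Submodule.mem_bot k).mpr (hnondeg x ?_)
  intro y
  have key : ∀ (E : g) (c c' : ℤ) (a b : g), ⁅E, a⁆ = c • a → ⁅E, b⁆ = c' • b →
      c + c' ≠ 0 → κ a b = 0 := by
    intro E c c' a b ha hb hcc
    have h := hinv a b E
    rw [ha, hb, map_zsmul, LinearMap.smul_apply, map_zsmul, ← add_zsmul] at h
    have : ((c + c' : ℤ) : k) * κ a b = 0 := by rwa [← zsmul_eq_mul]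
    rcases mul_eq_zero.mp this with h' | h'
    · exact absurd (Int.cast_eq_zero.mp h') hcc
    · exact h'
  have hker : (⨆ mn : ℤ × ℤ, simulEigenspace k H H' mn.1 mn.2) ≤ LinearMap.ker (κ x) := by
    refine iSup_le fun mn => ?_
    rintro z ⟨hz1, hz2⟩
    rw [LinearMap.mem_ker]
    by_cases hmn : mn = (-m, -n)
    · subst hmn
      have hbot := hvanish (-m) (-n) (by omega) (by omega)
      have hz : z ∈ (⊥ : Submodule k g) := hbot ▸
        (⟨hz1, hz2⟩ : z ∈ simulEigenspace k H H' (-m) (-n))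
      rw [(Submodule.mem_bot k).mp hz, map_zero]
    · have : mn.1 ≠ -m ∨ mn.2 ≠ -n := by
        by_contra hcon
        push_neg at hcon
        exact hmn (Prod.ext hcon.1 hcon.2)
      rcases this with h1 | h2
      · exact key H m mn.1 x z hx1 hz1 (by omega)
      · exact key H' n mn.2 x z hx2 hz2 (by omega)
  have : y ∈ LinearMap.ker (κ x) :=
    hker (hinternal.submodule_iSup_eq_top ▸ Submodule.mem_top)
  exact LinearMap.mem_ker.mp this
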